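/- arXiv:1502.05860 — 2 statements merged into one kernel-verified Lean document; each statement's English description precedes it below -/
import Mathlib

section
/- If a rewriting relation R on a set decomposes as the union of two relations W and C, such that W strictly decreases a natural-number size measure and C strictly increases it, and C-steps cannot create W-redexes (i.e. if x has no W-redex and x C-steps to y then y has no W-redex), then for any x, first normalizing x under W and then under C yields an R-normal form of x. -/
namespace Relation

variable {α : Type*} {r p : α → α → Prop} {a b c : α}

theorem ReflTransGen.invariant {q : α → Prop} (hq : ∀ x y, q x → r x y → q y)
    (hab : ReflTransGen r a b) (ha : q a) : q b := by
  induction hab with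
  | refl => exact ha
  | tail _ hstep ih => exact hq _ _ ih hstep

theorem ReflTransGen.trans_or (hab : ReflTransGen r a b) (hbc : ReflTransGen p b c) :
    ReflTransGen (fun x y => r x y ∨ p x y) a c :=
  (ReflTransGen.mono (fun _ _ => Or.inl) _ _ hab).trans
    (ReflTransGen.mono (fun _ _ => Or.inr) _ _ hbc)

end Relation

theorem wk_then_cont_gives_normal_form_general {A : Type*} (W C : A → A → Prop)
    (hpres : ∀ x y, (∀ u, ¬ W x u) → C x y → (∀ u, ¬ W y u)) :
    ∀ x y z, Relation.ReflTransGen W x y → (∀ u, ¬ W y u) →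
      Relation.ReflTransGen C y z → (∀ u, ¬ C z u) →
      Relation.ReflTransGen (fun a b => W a b ∨ C a b) x z ∧
        (∀ u, ¬ W z u) ∧ (∀ u, ¬ C z u) :=
  fun _ _ _ hxy hy hyz hz => ⟨hxy.trans_or hyz, hyz.invariant hpres hy, hz⟩

/-- If `R = W ∪ C`, where `W`-steps strictly decrease a size measure,
`C`-steps strictly increase it, and `C`-steps preserve `W`-normality,
then normalizing first under `W` and then under `C` yields an `R`-normal
form of the starting element. -/
theorem wk_then_cont_gives_normal_form {A : Type*} (W C : A → A → Prop) (s : A → ℕ)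
    (hW : ∀ x y, W x y → s y < s x)
    (hC : ∀ x y, C x y → s x < s y)
    (hpres : ∀ x y, (∀ u, ¬ W x u) → C x y → (∀ u, ¬ W y u)) :
    ∀ x y z, Relation.ReflTransGen W x y → (∀ u, ¬ W y u) →
      Relation.ReflTransGen C y z → (∀ u, ¬ C z u) →
      Relation.ReflTransGen (fun a b => W a b ∨ C a b) x z ∧
        (∀ u, ¬ W z u) ∧ (∀ u, ¬ C z u) :=
  wk_then_cont_gives_normal_form_general W C hpres
end

section
/- Generic contraction is derivable from atomic contraction and medial: for every NNF formula A there is a derivation from A ∨ A to A using only atomic contraction (on literals: a ∨ a ⟹ a), the medial implication, and associativity/commutativity/unit rearrangements; semantically, this amounts to a structurally recursive proof that A ∨ A implies A in which the disjunction is pushed down to the literals via medial. -/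
/-- Formulas in negation normal form over a set of variables `V`. -/
inductive NNF (V : Type*) where
  | tru : NNF V
  | fls : NNF V
  | pos : V → NNF V
  | neg : V → NNF V
  | and : NNF V → NNF V → NNF V
  | or  : NNF V → NNF V → NNF V

namespace NNF

/-- One rewriting step: atomic contraction on literals (and units), medial,
associativity/commutativity/unit rearrangements, all closed under contexts. -/
inductive CStep {V : Type*} : NNF V → NNF V → Prop
  | acPos (v : V) : CStep ((pos v).or (pos v)) (pos v)
  | acNeg (v : V) : CStep ((neg v).or (neg v)) (neg v)
  | medial (A B C D : NNF V) :
      CStep ((A.and B).or (C.and D)) ((A.or C).and (B.or D))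
  | orComm (A B : NNF V) : CStep (A.or B) (B.or A)
  | andComm (A B : NNF V) : CStep (A.and B) (B.and A)
  | orAssoc₁ (A B C : NNF V) : CStep ((A.or B).or C) (A.or (B.or C))
  | orAssoc₂ (A B C : NNF V) : CStep (A.or (B.or C)) ((A.or B).or C)
  | andAssoc₁ (A B C : NNF V) : CStep ((A.and B).and C) (A.and (B.and C))
  | andAssoc₂ (A B C : NNF V) : CStep (A.and (B.and C)) ((A.and B).and C)
  | orFls₁ (A : NNF V) : CStep (A.or fls) A
  | orFls₂ (A : NNF V) : CStep A (A.or fls)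
  | andTru₁ (A : NNF V) : CStep (A.and tru) A
  | andTru₂ (A : NNF V) : CStep A (A.and tru)
  | orTru₁ : CStep ((tru : NNF V).or tru) tru
  | orTru₂ : CStep (tru : NNF V) (tru.or tru)
  | andFls₁ : CStep ((fls : NNF V).and fls) fls
  | andFls₂ : CStep (fls : NNF V) (fls.and fls)
  | congAndL {A A' : NNF V} (B : NNF V) : CStep A A' → CStep (A.and B) (A'.and B)
  | congAndR {B B' : NNF V} (A : NNF V) : CStep B B' → CStep (A.and B) (A.and B')
  | congOrL {A A' : NNF V} (B : NNF V) : CStep A A' → CStep (A.or B) (A'.or B)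
  | congOrR {B B' : NNF V} (A : NNF V) : CStep B B' → CStep (A.or B) (A.or B')

end NNF

open NNF Relation

private lemma rtg_congAndL {V : Type*} {A A' : NNF V} (B : NNF V)
    (h : ReflTransGen CStep A A') : ReflTransGen CStep (A.and B) (A'.and B) := by
  induction h with
  | refl => exact .refl
  | tail _ s ih => exact ih.tail (CStep.congAndL B s)

private lemma rtg_congAndR {V : Type*} {B B' : NNF V} (A : NNF V)
    (h : ReflTransGen CStep B B') : ReflTransGen CStep (A.and B) (A.and B') := by
  induction h with
  | refl => exact .refl
  | tail _ s ih => exact ih.tail (CStep.congAndR A s)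

private lemma rtg_congOrL {V : Type*} {A A' : NNF V} (B : NNF V)
    (h : ReflTransGen CStep A A') : ReflTransGen CStep (A.or B) (A'.or B) := by
  induction h with
  | refl => exact .refl
  | tail _ s ih => exact ih.tail (CStep.congOrL B s)

private lemma rtg_congOrR {V : Type*} {B B' : NNF V} (A : NNF V)
    (h : ReflTransGen CStep B B') : ReflTransGen CStep (A.or B) (A.or B') := by
  induction h with
  | refl => exact .refl
  | tail _ s ih => exact ih.tail (CStep.congOrR A s)

/-- Generic contraction is derivable from atomic contraction, medial and
rearrangements: for every NNF formula `A`, `A ∨ A ⟹* A`. -/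
theorem generic_contraction_derivable {V : Type*} (A : NNF V) :
    Relation.ReflTransGen NNF.CStep (A.or A) A := by
  induction A with
  | tru => exact ReflTransGen.single CStep.orTru₁
  | fls => exact ReflTransGen.single (CStep.orFls₁ _)
  | pos v => exact ReflTransGen.single (CStep.acPos v)
  | neg v => exact ReflTransGen.single (CStep.acNeg v)
  | and A B ihA ihB =>
    exact (ReflTransGen.single (CStep.medial A B A B)).trans
      ((rtg_congAndL _ ihA).trans (rtg_congAndR _ ihB))
  | or A B ihA ihB =>
    refine (ReflTransGen.single (CStep.orAssoc₁ _ _ _)).trans ?_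
    refine (ReflTransGen.single (CStep.congOrR _ (CStep.orAssoc₂ _ _ _))).trans ?_
    refine (ReflTransGen.single (CStep.congOrR _ (CStep.congOrL _ (CStep.orComm _ _)))).trans ?_
    refine (ReflTransGen.single (CStep.congOrR _ (CStep.orAssoc₁ _ _ _))).trans ?_
    refine (ReflTransGen.single (CStep.orAssoc₂ _ _ _)).trans ?_
    exact (rtg_congOrL _ ihA).trans (rtg_congOrR _ ihB)
end
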